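/- Let n be a positive integer and let M be the largest integer with φ(M) ≤ 2n. If G is a finite group with |E_G| = 2n, then |G| ≤ 2n(Mn − n + 1). -/

import Mathlib

open Finset

/-- Radical of a natural number: product of its distinct prime divisors. -/
def rad (n : ℕ) : ℕ := n.primeFactors.prod id

/-- The coprime graph of a group: vertices are group elements, distinct
elements adjacent iff their orders are coprime. -/
def coprimeGraph (G : Type*) [Group G] : SimpleGraph G where
  Adj x y := x ≠ y ∧ Nat.Coprime (orderOf x) (orderOf y)
  symm := ⟨by intro x y h; exact ⟨h.1.symm, h.2.symm⟩⟩
  loopless := ⟨by intro x h; exact h.1 rfl⟩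

noncomputable instance (G : Type*) [Group G] [DecidableEq G] :
    DecidableRel (coprimeGraph G).Adj :=
  fun x y => inferInstanceAs (Decidable (x ≠ y ∧ Nat.Coprime (orderOf x) (orderOf y)))

/-- The set of non-identity end vertices of the coprime graph of `G`. -/
noncomputable def endVerts (G : Type*) [Group G] [Fintype G] [DecidableEq G] : Finset G :=
  Finset.univ.filter (fun x => x ≠ 1 ∧ rad (orderOf x) = rad (Fintype.card G))

lemma rad_primeFactors (m : ℕ) : (rad m).primeFactors = m.primeFactors :=
  Nat.primeFactors_prod fun _ hp => Nat.prime_of_mem_primeFactors hp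

lemma mem_endVerts_iff {G : Type*} [Group G] [Fintype G] [DecidableEq G] {z : G} :
    z ∈ endVerts G ↔ z ≠ 1 ∧ (orderOf z).primeFactors = (Fintype.card G).primeFactors := by
  unfold endVerts
  simp only [Finset.mem_filter, Finset.mem_univ, true_and]
  constructor
  · rintro ⟨h1, h2⟩
    refine ⟨h1, ?_⟩
    have := congrArg Nat.primeFactors h2
    rwa [rad_primeFactors, rad_primeFactors] at this
  · rintro ⟨h1, h2⟩
    exact ⟨h1, by unfold rad; rw [h2]⟩

lemma primeFactors_eq_iff {a g : ℕ} (hg : g ≠ 0) (hag : a ∣ g) :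
    a.primeFactors = g.primeFactors ↔ ∀ p ∈ g.primeFactors, p ∣ a := by
  have ha : a ≠ 0 := by rintro rfl; exact hg (zero_dvd_iff.mp hag)
  constructor
  · intro h p hp
    rw [← h] at hp
    exact (Nat.mem_primeFactors.mp hp).2.1
  · intro h
    apply subset_antisymm (Nat.primeFactors_mono hag hg)
    intro p hp
    exact Nat.mem_primeFactors.mpr ⟨(Nat.mem_primeFactors.mp hp).1, h p hp, ha⟩

lemma three_le_totient {d : ℕ} (hd : 7 ≤ d) : 3 ≤ Nat.totient d := by
  have key : ∃ w, 1 < w ∧ w < d - 1 ∧ Nat.Coprime d w := by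
    rcases Nat.even_or_odd d with he | ho
    · have hd2 : d % 2 = 0 := Nat.even_iff.mp he
      rcases Nat.even_or_odd (d / 2) with he2 | ho2
      · -- d ≡ 0 mod 4, take w = d/2 - 1
        have hd4 : d % 4 = 0 := by
          have := Nat.even_iff.mp he2
          omega
        refine ⟨d / 2 - 1, by omega, by omega, ?_⟩
        rw [Nat.coprime_iff_gcd_eq_one]
        by_contra hg
        obtain ⟨p, pp, hpd⟩ := Nat.exists_prime_and_dvd hg
        have h1 : p ∣ d := hpd.trans (Nat.gcd_dvd_left _ _)
        have h2 : p ∣ d / 2 - 1 := hpd.trans (Nat.gcd_dvd_right _ _)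
        have h3 : p ∣ 2 * (d / 2 - 1) := h2.mul_left 2
        have h4 : 2 * (d / 2 - 1) = d - 2 := by omega
        have h5 : p ∣ 2 := by
          have := Nat.dvd_sub h1 (h4 ▸ h3)
          simpa [show d - (d - 2) = 2 by omega] using this
        have hp2 : p = 2 := (Nat.prime_dvd_prime_iff_eq pp Nat.prime_two).mp h5
        subst hp2
        obtain ⟨c, hc⟩ := h2
        omega
      · -- d ≡ 2 mod 4, take w = d/2 + 2
        have hd4 : d % 4 = 2 := by
          have := Nat.odd_iff.mp ho2
          omega
        refine ⟨d / 2 + 2, by omega, by omega, ?_⟩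
        rw [Nat.coprime_iff_gcd_eq_one]
        by_contra hg
        obtain ⟨p, pp, hpd⟩ := Nat.exists_prime_and_dvd hg
        have h1 : p ∣ d := hpd.trans (Nat.gcd_dvd_left _ _)
        have h2 : p ∣ d / 2 + 2 := hpd.trans (Nat.gcd_dvd_right _ _)
        have h3 : p ∣ 2 * (d / 2 + 2) := h2.mul_left 2
        have h4 : 2 * (d / 2 + 2) = d + 4 := by omega
        have h5 : p ∣ 4 := by
          have := (Nat.dvd_sub (h4 ▸ h3) h1)
          simpa [show d + 4 - d = 4 by omega] using this
        have hp2 : p = 2 := by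
          have h5' : p ∣ 2 ^ 2 := by rw [show (2:ℕ) ^ 2 = 4 by norm_num]; exact h5
          exact (Nat.prime_dvd_prime_iff_eq pp Nat.prime_two).mp (pp.dvd_of_dvd_pow h5')
        subst hp2
        obtain ⟨c, hc⟩ := h2
        omega
    · exact ⟨2, by omega, by omega, Nat.coprime_two_right.mpr ho⟩
  obtain ⟨w, hw1, hw2, hwc⟩ := key
  have hcop1 : Nat.Coprime d 1 := Nat.coprime_one_right d
  have hcopd : Nat.Coprime d (d - 1) := by
    obtain ⟨k, rfl⟩ : ∃ k, d = 1 + k := ⟨d - 1, by omega⟩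
    simpa using (Nat.coprime_add_self_left).mpr (Nat.coprime_one_left k)
  have hsub : ({1, w, d - 1} : Finset ℕ) ⊆ (Finset.range d).filter d.Coprime := by
    intro a ha
    simp only [Finset.mem_insert, Finset.mem_singleton] at ha
    simp only [Finset.mem_filter, Finset.mem_range]
    rcases ha with rfl | rfl | rfl
    exacts [⟨by omega, hcop1⟩, ⟨by omega, hwc⟩, ⟨by omega, hcopd⟩]
  have hcard : ({1, w, d - 1} : Finset ℕ).card = 3 := by
    rw [Finset.card_insert_of_notMem (by simp; omega),
      Finset.card_insert_of_notMem (by simp; omega), Finset.card_singleton]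
  calc 3 = ({1, w, d - 1} : Finset ℕ).card := hcard.symm
    _ ≤ ((Finset.range d).filter d.Coprime).card := Finset.card_le_card hsub
    _ = Nat.totient d := (Nat.totient_eq_card_coprime d).symm

lemma prime_dvd_orderOf_iff {G : Type*} [Group G] [Fintype G] (z : G) {p : ℕ}
    (hp : p.Prime) :
    p ∣ orderOf z ↔ z ^ (Fintype.card G / p ^ (Fintype.card G).factorization p) ≠ 1 := by
  have hg0 : Fintype.card G ≠ 0 := Fintype.card_ne_zero
  constructor
  · intro hdvd h1
    have h2 : orderOf z ∣ ordCompl[p] (Fintype.card G) := orderOf_dvd_of_pow_eq_one h1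
    exact Nat.not_dvd_ordCompl hp hg0 (hdvd.trans h2)
  · intro h1
    by_contra hndvd
    apply h1
    have hdg : orderOf z ∣ Fintype.card G := orderOf_dvd_card
    have hco : Nat.Coprime (orderOf z) (p ^ (Fintype.card G).factorization p) :=
      Nat.Coprime.pow_right _ (((hp.coprime_iff_not_dvd).mpr hndvd).symm)
    have h3 : orderOf z ∣ p ^ (Fintype.card G).factorization p * ordCompl[p] (Fintype.card G) := by
      rw [Nat.ordProj_mul_ordCompl_eq_self]
      exact hdg
    exact orderOf_dvd_iff_pow_eq_one.mp (hco.dvd_of_dvd_mul_left h3)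

lemma key_lemma {G : Type*} [Group G] [Fintype G] [DecidableEq G]
    (x y : G) (hcomm : x * y = y * x) (hg1 : 1 < Fintype.card G)
    (hxfull : (orderOf x).primeFactors = (Fintype.card G).primeFactors) :
    ∃ W : Finset G, Nat.totient (orderOf x) ≤ W.card ∧
      ∀ z ∈ W, z ≠ 1 ∧ (orderOf z).primeFactors = (Fintype.card G).primeFactors ∧
        ∃ i : ℕ, z = x ^ i * y := by
  classical
  have hg0 : Fintype.card G ≠ 0 := Fintype.card_ne_zero
  set g := Fintype.card G with hgdef
  set d := orderOf x with hd
  have hd0 : 0 < d := orderOf_pos x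
  have hdg : d ∣ g := orderOf_dvd_card
  set P := g.primeFactors with hP
  have hPd : d.primeFactors = P := hxfull
  set m : ℕ → ℕ := fun p => g / p ^ g.factorization p with hm
  set u : ℕ → G := fun p => x ^ m p with hu
  have horder_u : ∀ p ∈ P, orderOf (u p) = p ^ d.factorization p := by
    intro p hp
    obtain ⟨pp, hpg, -⟩ := Nat.mem_primeFactors.mp hp
    have hgcd : Nat.gcd d (m p) = d / p ^ d.factorization p := by
      have h1 : ordCompl[p] d ∣ Nat.gcd d (m p) :=
        Nat.dvd_gcd (Nat.ordCompl_dvd d p) (Nat.ordCompl_dvd_ordCompl_of_dvd hdg p)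
      have hnd : ¬ p ∣ Nat.gcd d (m p) := by
        intro hdvd
        exact Nat.not_dvd_ordCompl pp hg0 (hdvd.trans (Nat.gcd_dvd_right _ _))
      have hco2 : Nat.Coprime (Nat.gcd d (m p)) (p ^ d.factorization p) :=
        Nat.Coprime.pow_right _ (((pp.coprime_iff_not_dvd).mpr hnd).symm)
      have h3 : Nat.gcd d (m p) ∣ p ^ d.factorization p * ordCompl[p] d := by
        rw [Nat.ordProj_mul_ordCompl_eq_self]
        exact Nat.gcd_dvd_left _ _
      exact Nat.dvd_antisymm (hco2.dvd_of_dvd_mul_left h3) h1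
    rw [hu]
    rw [orderOf_pow, ← hd, hgcd, Nat.div_div_self (Nat.ordProj_dvd d p) hd0.ne']
  set ι := {p : ℕ // p ∈ P} with hι
  set Z : ι → Finset G := fun p => (Finset.range (orderOf (u p.1))).image (fun i => (u p.1) ^ i)
    with hZ
  have hZcard : ∀ p : ι, (Z p).card = p.1 ^ d.factorization p.1 := by
    intro p
    have hinj : Set.InjOn (fun i => (u p.1) ^ i) ↑(Finset.range (orderOf (u p.1))) := by
      rw [Finset.coe_range]
      exact pow_injOn_Iio_orderOf
    rw [hZ]
    rw [Finset.card_image_of_injOn hinj, Finset.card_range, horder_u p.1 p.2]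
  set F : ℕ → (ι → G) := fun i p => (u p.1) ^ i with hF
  have hmemF : ∀ i, F i ∈ Fintype.piFinset Z := by
    intro i
    rw [Fintype.mem_piFinset]
    intro p
    rw [hZ]
    simp only [Finset.mem_image, Finset.mem_range]
    exact ⟨i % orderOf (u p.1), Nat.mod_lt _ (orderOf_pos _), pow_mod_orderOf _ _⟩
  have hprod_d : ∏ p : ι, p.1 ^ d.factorization p.1 = d := by
    rw [Finset.prod_coe_sort P (fun p => p ^ d.factorization p), ← hPd,
      ← Nat.support_factorization]
    simpa [Finsupp.prod] using Nat.factorization_prod_pow_eq_self hd0.ne'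
  have hinjF : Set.InjOn F ↑(Finset.range d) := by
    have hkey : ∀ i j : ℕ, i ≤ j → j < d → F i = F j → i = j := by
      intro i j hij hjd hFe
      have hdvd : ∀ p : ι, p.1 ^ d.factorization p.1 ∣ j - i := by
        intro p
        have h1 : (u p.1) ^ i = (u p.1) ^ j := congrFun hFe p
        have h2 : i ≡ j [MOD orderOf (u p.1)] := pow_eq_pow_iff_modEq.mp h1
        rw [horder_u p.1 p.2] at h2
        exact (Nat.modEq_iff_dvd' hij).mp h2
      by_contra hne
      have hsub0 : j - i ≠ 0 := by omega
      have hdd : d ∣ j - i := by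
        rw [← Nat.factorization_le_iff_dvd hd0.ne' hsub0]
        intro p
        by_cases hp : p ∈ P
        · have pp : p.Prime := Nat.prime_of_mem_primeFactors hp
          exact (Nat.Prime.pow_dvd_iff_le_factorization pp hsub0).mp (hdvd ⟨p, hp⟩)
        · have : p ∉ d.factorization.support := by
            rw [Nat.support_factorization, hPd]
            exact hp
          rw [Finsupp.notMem_support_iff] at this
          simp [this]
      have := Nat.le_of_dvd (by omega) hdd
      omega
    intro i hi j hj hFe
    rw [Finset.coe_range, Set.mem_Iio] at hi hj
    rcases le_total i j with h | h
    · exact hkey i j h hj hFe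
    · exact (hkey j i h hi hFe.symm).symm
  have himage : (Finset.range d).image F = Fintype.piFinset Z := by
    apply Finset.eq_of_subset_of_card_le
    · intro w hw
      obtain ⟨i, _, rfl⟩ := Finset.mem_image.mp hw
      exact hmemF i
    · rw [Fintype.card_piFinset]
      refine le_of_eq ?_
      calc (∏ p : ι, (Z p).card) = ∏ p : ι, p.1 ^ d.factorization p.1 :=
            Finset.prod_congr rfl fun p _ => hZcard p
        _ = d := hprod_d
        _ = (Finset.range d).card := (Finset.card_range d).symm
        _ = ((Finset.range d).image F).card := (Finset.card_image_of_injOn hinjF).symm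
  set W0 : Finset (ι → G) := Fintype.piFinset (fun p => (Z p).erase (y ^ m p.1)⁻¹) with hW0
  have hW0card : Nat.totient d ≤ W0.card := by
    rw [hW0, Fintype.card_piFinset]
    have h1 : Nat.totient d = ∏ p : ι, (p.1 ^ (d.factorization p.1 - 1) * (p.1 - 1)) := by
      rw [Finset.prod_coe_sort P (fun p => p ^ (d.factorization p - 1) * (p - 1)), ← hPd,
        ← Nat.support_factorization]
      simpa [Finsupp.prod] using Nat.totient_eq_prod_factorization hd0.ne'
    rw [h1]
    apply Finset.prod_le_prod'
    intro p _
    have hp2 : 2 ≤ p.1 := (Nat.prime_of_mem_primeFactors p.2).two_le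
    have hv1 : 1 ≤ d.factorization p.1 := by
      have hmem : p.1 ∈ d.primeFactors := by rw [hPd]; exact p.2
      rw [← Nat.support_factorization] at hmem
      exact Nat.one_le_iff_ne_zero.mpr (Finsupp.mem_support_iff.mp hmem)
    have hcard_erase : p.1 ^ d.factorization p.1 - 1 ≤ ((Z p).erase (y ^ m p.1)⁻¹).card := by
      have h := Finset.pred_card_le_card_erase (s := Z p) (a := (y ^ m p.1)⁻¹)
      rwa [hZcard p] at h
    refine le_trans ?_ hcard_erase
    have hq1 : 1 ≤ p.1 ^ (d.factorization p.1 - 1) := Nat.one_le_pow _ _ (by omega)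
    have hpow : p.1 ^ d.factorization p.1 = p.1 ^ (d.factorization p.1 - 1) * p.1 := by
      rw [← pow_succ]
      congr 1
      omega
    calc p.1 ^ (d.factorization p.1 - 1) * (p.1 - 1)
        = p.1 ^ (d.factorization p.1 - 1) * p.1 - p.1 ^ (d.factorization p.1 - 1) :=
          Nat.mul_sub_one _ _
      _ = p.1 ^ d.factorization p.1 - p.1 ^ (d.factorization p.1 - 1) := by rw [← hpow]
      _ ≤ p.1 ^ d.factorization p.1 - 1 := Nat.sub_le_sub_left hq1 _
  have hW0sub : W0 ⊆ Fintype.piFinset Z :=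
    Fintype.piFinset_subset _ _ (fun p => Finset.erase_subset _ _)
  set inv : (ι → G) → ℕ := fun w => Function.invFunOn F ↑(Finset.range d) w with hinv
  have hspec : ∀ w ∈ W0, F (inv w) = w ∧ inv w ∈ (↑(Finset.range d) : Set ℕ) := by
    intro w hw
    have hw' : w ∈ (Finset.range d).image F := himage ▸ hW0sub hw
    obtain ⟨i, hi, hFi⟩ := Finset.mem_image.mp hw'
    have hex : ∃ i ∈ (↑(Finset.range d) : Set ℕ), F i = w := ⟨i, by simpa using hi, hFi⟩
    exact ⟨Function.invFunOn_eq hex, Function.invFunOn_mem hex⟩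
  have hswap : ∀ (i : ℕ) (p : ι), (x ^ i) ^ m p.1 = F i p := by
    intro i p
    show (x ^ i) ^ m p.1 = (x ^ m p.1) ^ i
    rw [← pow_mul, ← pow_mul, mul_comm]
  refine ⟨W0.image (fun w => x ^ inv w * y), ?_, ?_⟩
  · rw [Finset.card_image_of_injOn]
    · exact hW0card
    · intro w1 hw1 w2 hw2 heq
      have h1 := (hspec w1 hw1).1
      have h2 := (hspec w2 hw2).1
      have hxx : x ^ inv w1 = x ^ inv w2 := mul_right_cancel heq
      funext p
      rw [← h1, ← h2, ← hswap, ← hswap, hxx]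
  · intro z hz
    obtain ⟨w, hw, rfl⟩ := Finset.mem_image.mp hz
    obtain ⟨hFi, hi_mem⟩ := hspec w hw
    have hcommp : Commute x y := hcomm
    have hzpow : ∀ p : ι, (x ^ inv w * y) ^ m p.1 = w p * y ^ m p.1 := by
      intro p
      rw [(hcommp.pow_left (inv w)).mul_pow]
      rw [hswap, hFi]
    have hfull : ∀ p ∈ P, p ∣ orderOf (x ^ inv w * y) := by
      intro p hp
      obtain ⟨pp, hpg, -⟩ := Nat.mem_primeFactors.mp hp
      rw [prime_dvd_orderOf_iff _ pp]
      show (x ^ inv w * y) ^ m p ≠ 1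
      rw [hzpow ⟨p, hp⟩]
      intro hone
      have heqi : w ⟨p, hp⟩ = (y ^ m p)⁻¹ := by
        rwa [mul_eq_one_iff_eq_inv] at hone
      exact Finset.ne_of_mem_erase ((Fintype.mem_piFinset.mp hw) ⟨p, hp⟩) heqi
    have hz1 : x ^ inv w * y ≠ 1 := by
      obtain ⟨p, pp, hpg⟩ := Nat.exists_prime_and_dvd (show g ≠ 1 by omega)
      have hp : p ∈ P := Nat.mem_primeFactors.mpr ⟨pp, hpg, hg0⟩
      intro h1
      have := hfull p hp
      rw [h1, orderOf_one, Nat.dvd_one] at this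
      exact pp.one_lt.ne' this
    exact ⟨hz1, (primeFactors_eq_iff hg0 orderOf_dvd_card).mpr hfull, inv w, rfl⟩

lemma arith_final {n d M t : ℕ} (hn : 1 ≤ n) (ht : 1 ≤ t) (hdM : d ≤ M) (hM6 : 6 ≤ M)
    (h1 : t ≤ 1 → d ≤ 2) (h2 : t = 2 → d ≤ 6) (h3 : 2 ≤ n → 8 ≤ M) :
    2 * n * d ≤ (n * (M - 1) + 1) * t := by
  obtain ⟨M', rfl⟩ : ∃ M', M = M' + 1 := ⟨M - 1, by omega⟩
  rw [Nat.add_sub_cancel]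
  rcases Nat.lt_or_ge t 3 with hlt | hge
  · rcases Nat.lt_or_ge n 2 with hn2 | hn2
    · obtain rfl : n = 1 := by omega
      interval_cases t
      · have hd2 := h1 le_rfl
        have : 5 ≤ M' := by omega
        nlinarith
      · have hd6 := h2 rfl
        nlinarith
    · have h7 : 7 ≤ M' := by have := h3 hn2; omega
      have h7n : 7 * n ≤ n * M' := by nlinarith
      interval_cases t
      · have hd2 := h1 le_rfl
        nlinarith
      · have hd6 := h2 rfl
        nlinarith
  · have h5 : 5 ≤ M' := by omega
    have h5n : 5 * n ≤ n * M' := by nlinarith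
    calc 2 * n * d ≤ 2 * n * (M' + 1) := Nat.mul_le_mul_left _ hdM
      _ ≤ (n * M' + 1) * 3 := by nlinarith
      _ ≤ (n * M' + 1) * t := Nat.mul_le_mul_left _ hge

theorem stmt8 (n M : ℕ) (hn : 0 < n)
    (hM : Nat.totient M ≤ 2 * n)
    (hMmax : ∀ m : ℕ, Nat.totient m ≤ 2 * n → m ≤ M)
    (G : Type*) [Group G] [Fintype G] [DecidableEq G]
    (hE : (endVerts G).card = 2 * n) :
    Fintype.card G ≤ 2 * n * (M * n - n + 1) := by
  classical
  have hSpos : 0 < (endVerts G).card := by rw [hE]; omega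
  obtain ⟨x, hxS⟩ := Finset.card_pos.mp hSpos
  obtain ⟨hx1, hxfull⟩ := mem_endVerts_iff.mp hxS
  have hg0 : Fintype.card G ≠ 0 := Fintype.card_ne_zero
  have hg1 : 1 < Fintype.card G := Fintype.one_lt_card_iff_nontrivial.mpr ⟨⟨x, 1, hx1⟩⟩
  set d := orderOf x with hd
  have hd0 : 0 < d := orderOf_pos x
  have hd1 : d ≠ 1 := fun h => hx1 (orderOf_eq_one_iff.mp h)
  -- Step B : totient d ≤ 2n
  have htot : Nat.totient d ≤ 2 * n := by
    rw [← hE, Nat.totient_eq_card_coprime]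
    apply Finset.card_le_card_of_injOn (fun k => x ^ k)
    · intro k hk
      simp only [Finset.coe_filter, Set.mem_setOf_eq, Finset.mem_filter, Finset.mem_range, Finset.mem_coe] at hk ⊢
      have hord : orderOf (x ^ k) = d := by
        rw [orderOf_pow, ← hd, Nat.Coprime.gcd_eq_one hk.2, Nat.div_one]
      rw [mem_endVerts_iff]
      refine ⟨?_, by rw [hord]; exact hxfull⟩
      intro h1
      rw [h1, orderOf_one] at hord
      exact hd1 hord.symm
    · intro a ha b hb hab
      simp only [Finset.coe_filter, Set.mem_setOf_eq, Finset.mem_range] at ha hb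
      exact pow_injOn_Iio_orderOf (Set.mem_Iio.mpr ha.1) (Set.mem_Iio.mpr hb.1) hab
  have hdM : d ≤ M := hMmax d htot
  have hM6 : 6 ≤ M := by
    apply hMmax
    have h6 : Nat.totient 6 = 2 := by decide
    rw [h6]; omega
  -- Step C : index of centralizer is at most 2n
  set C := Subgroup.centralizer ({x} : Set G) with hC
  have hxC : x ∈ C := Subgroup.mem_centralizer_iff.mpr
    (by intro h hh; rw [Set.mem_singleton_iff] at hh; rw [hh])
  have hQle : Nat.card (G ⧸ C) ≤ 2 * n := by
    letI : Fintype (G ⧸ C) := Fintype.ofFinite _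
    let fbar : G ⧸ C → G := fun q => Quotient.liftOn' q (fun a => a * x * a⁻¹) (by
      intro a b hab
      rw [QuotientGroup.leftRel_apply] at hab
      have hc : x * (a⁻¹ * b) = (a⁻¹ * b) * x := Subgroup.mem_centralizer_iff.mp hab x rfl
      have h2 : (a⁻¹ * b) * x * (a⁻¹ * b)⁻¹ = x := by
        rw [← hc, mul_inv_cancel_right]
      show a * x * a⁻¹ = b * x * b⁻¹
      calc a * x * a⁻¹ = a * ((a⁻¹ * b) * x * (a⁻¹ * b)⁻¹) * a⁻¹ := by rw [h2]
        _ = b * x * b⁻¹ := by group)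
    have hinj : Function.Injective fbar := by
      intro q1 q2
      refine Quotient.inductionOn₂' q1 q2 (fun a b h => ?_)
      have h' : a * x * a⁻¹ = b * x * b⁻¹ := h
      apply Quotient.sound'
      rw [QuotientGroup.leftRel_apply]
      apply Subgroup.mem_centralizer_iff.mpr
      intro h' hh'
      rw [Set.mem_singleton_iff] at hh'
      subst hh'
      have := congrArg (fun t => a⁻¹ * t * b) h'
      simpa [mul_assoc] using this
    have hmem : ∀ q : G ⧸ C, fbar q ∈ endVerts G := by
      refine fun q => Quotient.inductionOn' q (fun a => ?_)
      show a * x * a⁻¹ ∈ endVerts G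
      rw [mem_endVerts_iff]
      have hord : orderOf (a * x * a⁻¹) = d := by
        have h := orderOf_injective (MulAut.conj a).toMonoidHom (MulAut.conj a).injective x
        simpa [MulAut.conj_apply] using h
      refine ⟨?_, by rw [hord]; exact hxfull⟩
      intro h1
      apply hx1
      have := congrArg (fun t => a⁻¹ * t * a) h1
      simpa [mul_assoc] using this
    rw [Nat.card_eq_fintype_card, ← Finset.card_univ,
      ← Finset.card_image_of_injective Finset.univ hinj, ← hE]
    apply Finset.card_le_card
    intro z hz
    obtain ⟨q, _, rfl⟩ := Finset.mem_image.mp hz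
    exact hmem q
  -- Step D : |C| * φ(d) ≤ 2n * d
  set x' : C := ⟨x, hxC⟩ with hx'
  set H : Subgroup C := Subgroup.zpowers x' with hH
  have hHcard : Nat.card H = d := by
    rw [Nat.card_zpowers, ← orderOf_injective C.subtype C.subtype_injective x']
    rfl
  letI : Fintype (↥C ⧸ H) := Fintype.ofFinite _
  set ρ : G → (↥C ⧸ H) := fun z =>
    if h : z ∈ C then (QuotientGroup.mk (⟨z, h⟩ : C)) else QuotientGroup.mk 1 with hρ
  set T : Finset G := (endVerts G).filter (fun z => z ∈ C) with hT
  have hfiber : ∀ q : ↥C ⧸ H, Nat.totient d ≤ (T.filter (fun z => ρ z = q)).card := by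
    intro q
    obtain ⟨y', rfl⟩ := QuotientGroup.mk_surjective q
    have hyC : (y' : G) ∈ C := y'.2
    have hcomm : x * (y' : G) = (y' : G) * x := Subgroup.mem_centralizer_iff.mp hyC x rfl
    obtain ⟨W, hWcard, hWmem⟩ := key_lemma x (y' : G) hcomm hg1 hxfull
    refine le_trans hWcard (Finset.card_le_card ?_)
    intro z hz
    obtain ⟨hz1, hzfull, i, rfl⟩ := hWmem z hz
    have hzC : x ^ i * (y' : G) ∈ C := C.mul_mem (C.pow_mem hxC i) hyC
    rw [Finset.mem_filter]
    refine ⟨Finset.mem_filter.mpr ⟨mem_endVerts_iff.mpr ⟨hz1, hzfull⟩, hzC⟩, ?_⟩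
    have hρz : ρ (x ^ i * (y' : G)) = QuotientGroup.mk (⟨x ^ i * (y' : G), hzC⟩ : C) := by
      rw [hρ]
      exact dif_pos hzC
    rw [hρz]
    have hsub : (⟨x ^ i * (y' : G), hzC⟩ : C) = x' ^ i * y' := by
      apply Subtype.ext
      simp [hx']
    rw [hsub]
    rw [QuotientGroup.eq]
    have hcomm' : Commute x' y' := Subtype.ext hcomm
    have heq : (x' ^ i * y')⁻¹ * y' = (x' ^ i)⁻¹ := by
      rw [mul_inv_rev, mul_assoc, ((hcomm'.pow_left i).inv_left).eq, inv_mul_cancel_left]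
    rw [heq]
    exact H.inv_mem (Subgroup.npow_mem_zpowers x' i)
  have hTcard : Nat.card C * Nat.totient d ≤ 2 * n * d := by
    have h1 : Fintype.card (↥C ⧸ H) * Nat.totient d ≤ T.card := by
      rw [Finset.card_eq_sum_card_fiberwise (f := ρ) (t := Finset.univ) (fun z _ => Finset.mem_univ _)]
      have h := Finset.card_nsmul_le_sum Finset.univ
        (fun q => (T.filter (fun z => ρ z = q)).card) (Nat.totient d) (fun q _ => hfiber q)
      simpa [Finset.card_univ, smul_eq_mul] using h
    have h2 : T.card ≤ 2 * n := by
      rw [← hE]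
      exact Finset.card_le_card (Finset.filter_subset _ _)
    have h3 : Nat.card C = Fintype.card (↥C ⧸ H) * d := by
      rw [Subgroup.card_eq_card_quotient_mul_card_subgroup H, hHcard, Nat.card_eq_fintype_card]
    calc Nat.card C * Nat.totient d
        = Fintype.card (↥C ⧸ H) * Nat.totient d * d := by rw [h3]; ring
      _ ≤ T.card * d := Nat.mul_le_mul_right d h1
      _ ≤ 2 * n * d := Nat.mul_le_mul_right d h2
  -- combine
  have hGC : Nat.card G = Nat.card (G ⧸ C) * Nat.card C :=
    Subgroup.card_eq_card_quotient_mul_card_subgroup C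
  have htpos : 0 < Nat.totient d := Nat.totient_pos.mpr hd0
  have harith : 2 * n * d ≤ (n * (M - 1) + 1) * Nat.totient d := by
    apply arith_final hn htpos hdM hM6
    · intro h
      have := Nat.totient_eq_one_iff.mp (le_antisymm h htpos)
      omega
    · intro h
      by_contra hgt
      have := three_le_totient (d := d) (by omega)
      omega
    · intro h2
      apply hMmax
      have h8 : Nat.totient 8 = 4 := by decide
      rw [h8]; omega
  have hfinal : Nat.card G * Nat.totient d ≤ (2 * n * (n * (M - 1) + 1)) * Nat.totient d := by
    calc Nat.card G * Nat.totient d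
        = Nat.card (G ⧸ C) * (Nat.card C * Nat.totient d) := by rw [hGC]; ring
      _ ≤ (2 * n) * (Nat.card C * Nat.totient d) := Nat.mul_le_mul_right _ hQle
      _ ≤ (2 * n) * (2 * n * d) := Nat.mul_le_mul_left _ hTcard
      _ ≤ (2 * n) * ((n * (M - 1) + 1) * Nat.totient d) := Nat.mul_le_mul_left _ harith
      _ = (2 * n * (n * (M - 1) + 1)) * Nat.totient d := by ring
  have hcard : Nat.card G ≤ 2 * n * (n * (M - 1) + 1) :=
    Nat.le_of_mul_le_mul_right hfinal htpos
  have hform : M * n - n + 1 = n * (M - 1) + 1 := by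
    obtain ⟨M', rfl⟩ : ∃ M', M = M' + 1 := ⟨M - 1, by omega⟩
    rw [Nat.add_sub_cancel, add_mul, one_mul, Nat.add_sub_cancel, mul_comm]
  rw [hform, ← Nat.card_eq_fintype_card]
  exact hcard
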